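/- Let α ∈ (0,1), π_0 ∈ (0,1), and define the distribution function F(n) = Σ_{i=1}^n f_{i-1} where f_0 = 1 - ((1-π_0)/π_0)(1 - 2^{-α}) and f_i = ((1-π_0)/π_0)(i^{-α} - 2(i+1)^{-α} + (i+2)^{-α}) for i ≥ 1. Then 1 - F(n) ~ ((1-π_0)/π_0)·α·n^{-(1+α)} as n → ∞, in the sense that the ratio tends to 1. -/

import Mathlib

/-!
Writing `c = (1 - π₀)/π₀` and `g i = i ^ (-α)`, each `f i` with `i ≥ 1` is `c` times a second
difference of `g`, and `f 0` is chosen so that the partial sums telescope: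
`1 - F(n) = c (g n - g (n + 1))`. The first difference `n ^ (-α) - (n + 1) ^ (-α)` is asymptotic to
`α n ^ (-α - 1)`, because `x ((1 + 1/x) ^ p - 1)` tends to the derivative `p` of `t ↦ (1 + t) ^ p`
at `0`.
-/

open Filter Topology

theorem one_sub_sum_range_eq_of_eq_second_difference {c : ℝ} {g f : ℕ → ℝ}
    (hf0 : f 0 = 1 - c * (g 1 - g 2))
    (hf : ∀ i, 1 ≤ i → f i = c * (g i - 2 * g (i + 1) + g (i + 2))) {n : ℕ} (hn : 1 ≤ n) :
    1 - ∑ i ∈ Finset.range n, f i = c * (g n - g (n + 1)) := by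
  induction n, hn using Nat.le_induction with
  | base => simp [hf0]
  | succ m hm ih =>
    rw [Finset.sum_range_succ, sub_add_eq_sub_sub, ih, hf m hm]
    ring

theorem tendsto_mul_one_add_inv_rpow_sub_one (p : ℝ) :
    Tendsto (fun x : ℝ => x * ((1 + x⁻¹) ^ p - 1)) atTop (𝓝 p) := by
  have hderiv : HasDerivAt (fun t : ℝ => (1 + t) ^ p) p 0 := by
    simpa using ((hasDerivAt_id (0 : ℝ)).const_add 1).rpow_const (p := p) (by simp)
  have hinv : Tendsto (fun x : ℝ => x⁻¹) atTop (𝓝[≠] 0) :=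
    tendsto_nhdsWithin_mono_right (fun _ hx => ne_of_gt hx) tendsto_inv_atTop_nhdsGT_zero
  refine ((hasDerivAt_iff_tendsto_slope.mp hderiv).comp hinv).congr fun x => ?_
  simp [slope_def_field, div_eq_mul_inv, mul_comm]

theorem tendsto_add_one_rpow_sub_rpow_div {p : ℝ} (hp : p ≠ 0) :
    Tendsto (fun x : ℝ => ((x + 1) ^ p - x ^ p) / (p * x ^ (p - 1))) atTop (𝓝 1) := by
  have h := (tendsto_mul_one_add_inv_rpow_sub_one p).div_const p
  rw [div_self hp] at h
  refine h.congr' ?_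
  filter_upwards [eventually_gt_atTop 0] with x hx
  have hsplit : x + 1 = x * (1 + x⁻¹) := by field_simp
  rw [hsplit, Real.mul_rpow hx.le (by positivity), Real.rpow_sub_one hx.ne']
  field_simp

theorem stmt8_general (α π0 : ℝ) (hα : α ∈ Set.Ioo (0:ℝ) 1) (hπ0 : π0 ∈ Set.Ioo (0:ℝ) 1)
    (f : ℕ → ℝ)
    (hf0 : f 0 = 1 - ((1 - π0) / π0) * (1 - (2 : ℝ) ^ (-α)))
    (hf : ∀ i : ℕ, 1 ≤ i → f i = ((1 - π0) / π0) *
      ((i : ℝ) ^ (-α) - 2 * ((i : ℝ) + 1) ^ (-α) + ((i : ℝ) + 2) ^ (-α))) :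
    Filter.Tendsto
      (fun n : ℕ => (1 - ∑ i ∈ Finset.range n, f i) /
        (((1 - π0) / π0) * α * (n : ℝ) ^ (-(1 + α))))
      Filter.atTop (nhds 1) := by
  set c := (1 - π0) / π0
  have hc : c ≠ 0 := div_ne_zero (by linarith [hπ0.2]) hπ0.1.ne'
  have htail : ∀ n : ℕ, 1 ≤ n →
      1 - ∑ i ∈ Finset.range n, f i = c * ((n : ℝ) ^ (-α) - ((n : ℝ) + 1) ^ (-α)) := by
    intro n hn
    simpa using one_sub_sum_range_eq_of_eq_second_difference (c := c) (f := f)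
      (g := fun i : ℕ => (i : ℝ) ^ (-α)) (by simp [hf0])
      (fun i hi => by push_cast; rw [hf i hi]) hn
  have hlim := (tendsto_add_one_rpow_sub_rpow_div (neg_ne_zero.mpr hα.1.ne')).comp
    tendsto_natCast_atTop_atTop
  refine hlim.congr' ?_
  filter_upwards [eventually_ge_atTop 1] with n hn
  rw [Function.comp_apply, htail n hn, show -(1 + α) = -α - 1 by ring]
  field_simp
  ring

/-- `1 - F(n) ~ ((1-π0)/π0) α n^{-(1+α)}` where `F n = Σ_{i<n} f i`. -/
theorem stmt8 (α π0 : ℝ) (hα : α ∈ Set.Ioo (0:ℝ) 1) (hπ0 : π0 ∈ Set.Ioo (0:ℝ) 1)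
    (hvalid : ((2 : ℝ) ^ α - 1) / ((2 : ℝ) ^ (α + 1) - 1) < π0)
    (f : ℕ → ℝ)
    (hf0 : f 0 = 1 - ((1 - π0) / π0) * (1 - (2 : ℝ) ^ (-α)))
    (hf : ∀ i : ℕ, 1 ≤ i → f i = ((1 - π0) / π0) *
      ((i : ℝ) ^ (-α) - 2 * ((i : ℝ) + 1) ^ (-α) + ((i : ℝ) + 2) ^ (-α))) :
    Filter.Tendsto
      (fun n : ℕ => (1 - ∑ i ∈ Finset.range n, f i) /
        (((1 - π0) / π0) * α * (n : ℝ) ^ (-(1 + α))))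
      Filter.atTop (nhds 1) :=
  stmt8_general α π0 hα hπ0 f hf0 hf
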